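/- arXiv:1511.02129 — 5 statements merged into one kernel-verified Lean document; each statement's English description precedes it below -/
import Mathlib

section
/- If u ∈ C⁴[0,1] satisfies u(0)=u'(0)=u''(1)=u'''(1)=0 and u⁗ ≥ 0 on [0,1], then u(t) ≥ -(t³/6)·u'''(t) for all t ∈ [0,1]. -/
open Set intervalIntegral Real

/-!
Fix `t` and put `c = u'''(t) ≤ 0`. Since `u'''` is nondecreasing, `u''' ≤ c` on `[0, t]`;
integrating three times from the boundary data (`u''(t) ≥ 0` at the first step, `u'(0) = u(0) = 0`
at the other two) gives `u'' ≥ c (s - t)`, `u' ≥ c (s²/2 - t s)` and finally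
`u(t) ≥ -(t³/3) c ≥ -(t³/6) c`.
-/

section DerivComparison

variable {D : Set ℝ} {f f' g g' : ℝ → ℝ}

theorem Convex.monotoneOn_of_hasDerivWithinAt_nonneg (hD : Convex ℝ D)
    (hf : ∀ x ∈ D, HasDerivWithinAt f (f' x) D x) (hf' : ∀ x ∈ D, 0 ≤ f' x) :
    MonotoneOn f D :=
  _root_.monotoneOn_of_hasDerivWithinAt_nonneg hD (fun x hx => (hf x hx).continuousWithinAt)
    (fun x hx => (hf x (interior_subset hx)).mono interior_subset)
    (fun x hx => hf' x (interior_subset hx))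

theorem Convex.antitoneOn_of_hasDerivWithinAt_nonpos (hD : Convex ℝ D)
    (hf : ∀ x ∈ D, HasDerivWithinAt f (f' x) D x) (hf' : ∀ x ∈ D, f' x ≤ 0) :
    AntitoneOn f D := by
  have := hD.monotoneOn_of_hasDerivWithinAt_nonneg (fun x hx => (hf x hx).neg)
    (fun x hx => neg_nonneg.2 (hf' x hx))
  exact fun x hx y hy hxy => neg_le_neg_iff.1 (this hx hy hxy)

theorem Convex.monotoneOn_sub_of_hasDerivWithinAt_le (hD : Convex ℝ D)
    (hf : ∀ x ∈ D, HasDerivWithinAt f (f' x) D x) (hg : ∀ x ∈ D, HasDerivWithinAt g (g' x) D x)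
    (hle : ∀ x ∈ D, g' x ≤ f' x) :
    MonotoneOn (fun x => f x - g x) D :=
  hD.monotoneOn_of_hasDerivWithinAt_nonneg (fun x hx => (hf x hx).sub (hg x hx))
    (fun x hx => sub_nonneg.2 (hle x hx))

end DerivComparison

theorem neg_cube_div_three_mul_le {t : ℝ} {u u1 u2 u3 : ℝ → ℝ} (ht : 0 ≤ t)
    (hu1 : ∀ x ∈ Icc 0 t, HasDerivWithinAt u (u1 x) (Icc 0 t) x)
    (hu2 : ∀ x ∈ Icc 0 t, HasDerivWithinAt u1 (u2 x) (Icc 0 t) x)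
    (hu3 : ∀ x ∈ Icc 0 t, HasDerivWithinAt u2 (u3 x) (Icc 0 t) x)
    (hb0 : u 0 = 0) (hb1 : u1 0 = 0) (hu2t : 0 ≤ u2 t) (hu3_le : ∀ x ∈ Icc 0 t, u3 x ≤ u3 t) :
    -(t ^ 3 / 3) * u3 t ≤ u t := by
  set c := u3 t
  have h0 : (0 : ℝ) ∈ Icc 0 t := left_mem_Icc.2 ht
  have htt : t ∈ Icc 0 t := right_mem_Icc.2 ht
  have hu2_ge : ∀ x ∈ Icc 0 t, c * (x - t) ≤ u2 x := by
    have hmono := (convex_Icc 0 t).monotoneOn_sub_of_hasDerivWithinAt_le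
      (fun x _ => (hasDerivAt_mul_const c).hasDerivWithinAt) hu3 hu3_le
    intro x hx
    have := hmono hx htt hx.2
    linarith
  have hu1_ge : ∀ x ∈ Icc 0 t, c * (x ^ 2 / 2 - t * x) ≤ u1 x := by
    have hderiv (x : ℝ) : HasDerivAt (fun x => c * (x ^ 2 / 2 - t * x)) (c * (x - t)) x := by
      have := (((hasDerivAt_pow 2 x).div_const 2).sub ((hasDerivAt_id' x).const_mul t)).const_mul c
      exact this.congr_deriv (by push_cast; ring)
    have hmono := (convex_Icc 0 t).monotoneOn_sub_of_hasDerivWithinAt_le hu2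
      (fun x _ => (hderiv x).hasDerivWithinAt) hu2_ge
    intro x hx
    have := hmono h0 hx hx.1
    simp only [hb1] at this
    linarith
  have hderiv (x : ℝ) : HasDerivAt (fun x => c * (x ^ 3 / 6 - t * (x ^ 2 / 2)))
      (c * (x ^ 2 / 2 - t * x)) x := by
    have := (((hasDerivAt_pow 3 x).div_const 6).sub
      (((hasDerivAt_pow 2 x).div_const 2).const_mul t)).const_mul c
    exact this.congr_deriv (by push_cast; ring)
  have hmono := (convex_Icc 0 t).monotoneOn_sub_of_hasDerivWithinAt_le hu1
    (fun x _ => (hderiv x).hasDerivWithinAt) hu1_ge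
  have := hmono h0 htt ht
  simp only [hb0] at this
  linarith

theorem stmt3_general (u u1 u2 u3 u4 : ℝ → ℝ)
    (hu1 : ∀ t ∈ Set.Icc (0:ℝ) 1, HasDerivWithinAt u (u1 t) (Set.Icc 0 1) t)
    (hu2 : ∀ t ∈ Set.Icc (0:ℝ) 1, HasDerivWithinAt u1 (u2 t) (Set.Icc 0 1) t)
    (hu3 : ∀ t ∈ Set.Icc (0:ℝ) 1, HasDerivWithinAt u2 (u3 t) (Set.Icc 0 1) t)
    (hu4 : ∀ t ∈ Set.Icc (0:ℝ) 1, HasDerivWithinAt u3 (u4 t) (Set.Icc 0 1) t)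
    (hb0 : u 0 = 0) (hb1 : u1 0 = 0) (hb2 : u2 1 = 0) (hb3 : u3 1 = 0)
    (hpos : ∀ t ∈ Set.Icc (0:ℝ) 1, 0 ≤ u4 t) :
    ∀ t ∈ Set.Icc (0:ℝ) 1, u t ≥ -(t ^ 3 / 6) * u3 t := by
  have h1 : (1 : ℝ) ∈ Icc 0 1 := right_mem_Icc.2 zero_le_one
  have hu3_mono : MonotoneOn u3 (Icc 0 1) :=
    (convex_Icc 0 1).monotoneOn_of_hasDerivWithinAt_nonneg hu4 hpos
  have hu3_nonpos : ∀ x ∈ Icc (0:ℝ) 1, u3 x ≤ 0 := fun x hx => hb3 ▸ hu3_mono hx h1 hx.2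
  have hu2_anti : AntitoneOn u2 (Icc 0 1) :=
    (convex_Icc 0 1).antitoneOn_of_hasDerivWithinAt_nonpos hu3 hu3_nonpos
  intro t ht
  have hsub : Icc 0 t ⊆ Icc (0:ℝ) 1 := Icc_subset_Icc_right ht.2
  have restrict {f f' : ℝ → ℝ} (hf : ∀ x ∈ Icc (0:ℝ) 1, HasDerivWithinAt f (f' x) (Icc 0 1) x) :
      ∀ x ∈ Icc 0 t, HasDerivWithinAt f (f' x) (Icc 0 t) x :=
    fun x hx => (hf x (hsub hx)).mono hsub
  have hbound := neg_cube_div_three_mul_le ht.1 (restrict hu1) (restrict hu2) (restrict hu3) hb0 hb1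
    (hb2 ▸ hu2_anti ht h1 ht.2) (fun x hx => hu3_mono (hsub hx) ht hx.2)
  nlinarith [pow_nonneg ht.1 3, hu3_nonpos t ht]

theorem stmt3 (u u1 u2 u3 u4 : ℝ → ℝ)
    (hu1 : ∀ t ∈ Set.Icc (0:ℝ) 1, HasDerivWithinAt u (u1 t) (Set.Icc 0 1) t)
    (hu2 : ∀ t ∈ Set.Icc (0:ℝ) 1, HasDerivWithinAt u1 (u2 t) (Set.Icc 0 1) t)
    (hu3 : ∀ t ∈ Set.Icc (0:ℝ) 1, HasDerivWithinAt u2 (u3 t) (Set.Icc 0 1) t)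
    (hu4 : ∀ t ∈ Set.Icc (0:ℝ) 1, HasDerivWithinAt u3 (u4 t) (Set.Icc 0 1) t)
    (hc4 : ContinuousOn u4 (Set.Icc 0 1))
    (hb0 : u 0 = 0) (hb1 : u1 0 = 0) (hb2 : u2 1 = 0) (hb3 : u3 1 = 0)
    (hpos : ∀ t ∈ Set.Icc (0:ℝ) 1, 0 ≤ u4 t) :
    ∀ t ∈ Set.Icc (0:ℝ) 1, u t ≥ -(t ^ 3 / 6) * u3 t :=
  stmt3_general u u1 u2 u3 u4 hu1 hu2 hu3 hu4 hb0 hb1 hb2 hb3 hpos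
end

section
/- If u ∈ C⁴[0,1] satisfies u(0)=u'(0)=u''(1)=u'''(1)=0 and u⁗ ≥ 0 on [0,1], then ∫₀¹ (u''(t))² dt ≤ -u'''(0)·u'(1). -/
open Set intervalIntegral Real

theorem stmt4 (u u1 u2 u3 u4 : ℝ → ℝ)
    (hu1 : ∀ t ∈ Set.Icc (0:ℝ) 1, HasDerivWithinAt u (u1 t) (Set.Icc 0 1) t)
    (hu2 : ∀ t ∈ Set.Icc (0:ℝ) 1, HasDerivWithinAt u1 (u2 t) (Set.Icc 0 1) t)
    (hu3 : ∀ t ∈ Set.Icc (0:ℝ) 1, HasDerivWithinAt u2 (u3 t) (Set.Icc 0 1) t)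
    (hu4 : ∀ t ∈ Set.Icc (0:ℝ) 1, HasDerivWithinAt u3 (u4 t) (Set.Icc 0 1) t)
    (hc4 : ContinuousOn u4 (Set.Icc 0 1))
    (hb0 : u 0 = 0) (hb1 : u1 0 = 0) (hb2 : u2 1 = 0) (hb3 : u3 1 = 0)
    (hpos : ∀ t ∈ Set.Icc (0:ℝ) 1, 0 ≤ u4 t) :
    ∫ t in (0:ℝ)..1, (u2 t) ^ 2 ≤ -u3 0 * u1 1 := by
  have h01 : (0:ℝ) ≤ 1 := zero_le_one
  have hmem0 : (0:ℝ) ∈ Icc (0:ℝ) 1 := ⟨le_refl 0, h01⟩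
  have hmem1 : (1:ℝ) ∈ Icc (0:ℝ) 1 := ⟨h01, le_refl 1⟩
  have huI : Set.uIcc (0:ℝ) 1 = Icc (0:ℝ) 1 := uIcc_of_le h01
  have hintD : interior (Icc (0:ℝ) 1) = Ioo 0 1 := interior_Icc
  -- continuity
  have hcu : ContinuousOn u (Icc 0 1) := fun t ht => (hu1 t ht).continuousWithinAt
  have hcu1 : ContinuousOn u1 (Icc 0 1) := fun t ht => (hu2 t ht).continuousWithinAt
  have hcu2 : ContinuousOn u2 (Icc 0 1) := fun t ht => (hu3 t ht).continuousWithinAt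
  have hcu3 : ContinuousOn u3 (Icc 0 1) := fun t ht => (hu4 t ht).continuousWithinAt
  -- integrability
  have hiu1 : IntervalIntegrable u1 MeasureTheory.volume 0 1 :=
    (hcu1.mono (le_of_eq huI)).intervalIntegrable
  have hiu2 : IntervalIntegrable u2 MeasureTheory.volume 0 1 :=
    (hcu2.mono (le_of_eq huI)).intervalIntegrable
  have hiu3 : IntervalIntegrable u3 MeasureTheory.volume 0 1 :=
    (hcu3.mono (le_of_eq huI)).intervalIntegrable
  have hiu4 : IntervalIntegrable u4 MeasureTheory.volume 0 1 :=
    (hc4.mono (le_of_eq huI)).intervalIntegrable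
  -- generic FTC on [0,1]
  have ftc : ∀ f f' : ℝ → ℝ, (∀ t ∈ Icc (0:ℝ) 1, HasDerivWithinAt f (f' t) (Icc 0 1) t) →
      IntervalIntegrable f' MeasureTheory.volume 0 1 →
      ∫ t in (0:ℝ)..1, f' t = f 1 - f 0 := by
    intro f f' hf hf'
    apply intervalIntegral.integral_eq_sub_of_hasDeriv_right_of_le h01
    · exact fun t ht => (hf t ht).continuousWithinAt
    · intro x hx
      exact ((hf x (Ioo_subset_Icc_self hx)).hasDerivAt
        (Icc_mem_nhds hx.1 hx.2)).hasDerivWithinAt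
    · exact hf'
  -- u3 monotone, hence u3 ≤ 0 on Icc
  have hmono3 : MonotoneOn u3 (Icc 0 1) := by
    apply monotoneOn_of_hasDerivWithinAt_nonneg (convex_Icc 0 1) hcu3
    · intro x hx
      rw [hintD] at hx ⊢
      exact ((hu4 x (Ioo_subset_Icc_self hx)).mono Ioo_subset_Icc_self)
    · intro x hx
      rw [hintD] at hx
      exact hpos x (Ioo_subset_Icc_self hx)
  have h3le : ∀ t ∈ Icc (0:ℝ) 1, u3 t ≤ 0 := by
    intro t ht
    calc u3 t ≤ u3 1 := hmono3 ht hmem1 ht.2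
    _ = 0 := hb3
  -- u2 antitone, hence u2 ≥ 0 on Icc
  have hanti2 : AntitoneOn u2 (Icc 0 1) := by
    apply antitoneOn_of_hasDerivWithinAt_nonpos (convex_Icc 0 1) hcu2
    · intro x hx
      rw [hintD] at hx ⊢
      exact ((hu3 x (Ioo_subset_Icc_self hx)).mono Ioo_subset_Icc_self)
    · intro x hx
      rw [hintD] at hx
      exact h3le x (Ioo_subset_Icc_self hx)
  have h2ge : ∀ t ∈ Icc (0:ℝ) 1, 0 ≤ u2 t := by
    intro t ht
    calc (0:ℝ) = u2 1 := hb2.symm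
    _ ≤ u2 t := hanti2 ht hmem1 ht.2
  -- u1 monotone, hence 0 ≤ u1 ≤ u1 1 on Icc
  have hmono1 : MonotoneOn u1 (Icc 0 1) := by
    apply monotoneOn_of_hasDerivWithinAt_nonneg (convex_Icc 0 1) hcu1
    · intro x hx
      rw [hintD] at hx ⊢
      exact ((hu2 x (Ioo_subset_Icc_self hx)).mono Ioo_subset_Icc_self)
    · intro x hx
      rw [hintD] at hx
      exact h2ge x (Ioo_subset_Icc_self hx)
  have h1ge : ∀ t ∈ Icc (0:ℝ) 1, 0 ≤ u1 t := by
    intro t ht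
    calc (0:ℝ) = u1 0 := hb1.symm
    _ ≤ u1 t := hmono1 hmem0 ht ht.1
  have h1le : ∀ t ∈ Icc (0:ℝ) 1, u1 t ≤ u1 1 := fun t ht => hmono1 ht hmem1 ht.2
  -- u monotone, u ≤ u 1
  have hmonou : MonotoneOn u (Icc 0 1) := by
    apply monotoneOn_of_hasDerivWithinAt_nonneg (convex_Icc 0 1) hcu
    · intro x hx
      rw [hintD] at hx ⊢
      exact ((hu1 x (Ioo_subset_Icc_self hx)).mono Ioo_subset_Icc_self)
    · intro x hx
      rw [hintD] at hx
      exact h1ge x (Ioo_subset_Icc_self hx)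
  -- u 1 ≤ u1 1
  have hu1top : u 1 ≤ u1 1 := by
    have h1 : ∫ t in (0:ℝ)..1, u1 t = u 1 - u 0 := ftc u u1 hu1 hiu1
    have h2 : ∫ t in (0:ℝ)..1, u1 t ≤ ∫ t in (0:ℝ)..1, u1 1 := by
      apply intervalIntegral.integral_mono_on h01 hiu1 intervalIntegrable_const
      exact h1le
    simpa [hb0, h1] using h2.trans_eq (by simp)
  have hule : ∀ t ∈ Icc (0:ℝ) 1, u t ≤ u1 1 := fun t ht =>
    (hmonou ht hmem1 ht.2).trans hu1top
  -- integration by parts twice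
  have hibp1 : ∫ t in (0:ℝ)..1, (u3 t * u1 t + u2 t * u2 t) = u2 1 * u1 1 - u2 0 * u1 0 := by
    apply intervalIntegral.integral_deriv_mul_eq_sub_of_hasDerivWithinAt
    · intro x hx; rw [huI] at hx ⊢; exact hu3 x hx
    · intro x hx; rw [huI] at hx ⊢; exact hu2 x hx
    · exact hiu3
    · exact hiu2
  have hibp2 : ∫ t in (0:ℝ)..1, (u4 t * u t + u3 t * u1 t) = u3 1 * u 1 - u3 0 * u 0 := by
    apply intervalIntegral.integral_deriv_mul_eq_sub_of_hasDerivWithinAt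
    · intro x hx; rw [huI] at hx ⊢; exact hu4 x hx
    · intro x hx; rw [huI] at hx ⊢; exact hu1 x hx
    · exact hiu4
    · exact hiu1
  -- split integrals
  have hi31 : IntervalIntegrable (fun t => u3 t * u1 t) MeasureTheory.volume 0 1 :=
    ((hcu3.mul hcu1).mono (le_of_eq huI)).intervalIntegrable
  have hi22 : IntervalIntegrable (fun t => u2 t * u2 t) MeasureTheory.volume 0 1 :=
    ((hcu2.mul hcu2).mono (le_of_eq huI)).intervalIntegrable
  have hi4u : IntervalIntegrable (fun t => u4 t * u t) MeasureTheory.volume 0 1 :=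
    ((hc4.mul hcu).mono (le_of_eq huI)).intervalIntegrable
  have key : ∫ t in (0:ℝ)..1, u2 t * u2 t = ∫ t in (0:ℝ)..1, u4 t * u t := by
    rw [intervalIntegral.integral_add hi31 hi22] at hibp1
    rw [intervalIntegral.integral_add hi4u hi31] at hibp2
    simp only [hb2, hb1, hb3, hb0, zero_mul, mul_zero, sub_zero, zero_sub] at hibp1 hibp2
    linarith
  -- bound the remaining integral
  have hbound : ∫ t in (0:ℝ)..1, u4 t * u t ≤ ∫ t in (0:ℝ)..1, u4 t * u1 1 := by
    apply intervalIntegral.integral_mono_on h01 hi4u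
      (hiu4.mul_const _)
    intro t ht
    exact mul_le_mul_of_nonneg_left (hule t ht) (hpos t ht)
  have hfin : ∫ t in (0:ℝ)..1, u4 t * u1 1 = -u3 0 * u1 1 := by
    rw [intervalIntegral.integral_mul_const, ftc u3 u4 hu4 hiu4, hb3]
    ring
  calc ∫ t in (0:ℝ)..1, (u2 t) ^ 2 = ∫ t in (0:ℝ)..1, u2 t * u2 t := by
        simp [pow_two]
    _ = ∫ t in (0:ℝ)..1, u4 t * u t := key
    _ ≤ ∫ t in (0:ℝ)..1, u4 t * u1 1 := hbound
    _ = -u3 0 * u1 1 := hfin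
end

section
/- If u ∈ C⁴[0,1] satisfies u(0)=u'(0)=u''(1)=u'''(1)=0 and u⁗ ≥ 0 on [0,1], then -u'''(0) ≥ √2 · (∫₀¹ (u''(t))² dt)^{1/2}. -/
open Set intervalIntegral Real

theorem stmt6 (u u1 u2 u3 u4 : ℝ → ℝ)
    (hu1 : ∀ t ∈ Set.Icc (0:ℝ) 1, HasDerivWithinAt u (u1 t) (Set.Icc 0 1) t)
    (hu2 : ∀ t ∈ Set.Icc (0:ℝ) 1, HasDerivWithinAt u1 (u2 t) (Set.Icc 0 1) t)
    (hu3 : ∀ t ∈ Set.Icc (0:ℝ) 1, HasDerivWithinAt u2 (u3 t) (Set.Icc 0 1) t)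
    (hu4 : ∀ t ∈ Set.Icc (0:ℝ) 1, HasDerivWithinAt u3 (u4 t) (Set.Icc 0 1) t)
    (hc4 : ContinuousOn u4 (Set.Icc 0 1))
    (hb0 : u 0 = 0) (hb1 : u1 0 = 0) (hb2 : u2 1 = 0) (hb3 : u3 1 = 0)
    (hpos : ∀ t ∈ Set.Icc (0:ℝ) 1, 0 ≤ u4 t) :
    -u3 0 ≥ Real.sqrt 2 * Real.sqrt (∫ t in (0:ℝ)..1, (u2 t) ^ 2) := by
  have hIcc : interior (Set.Icc (0:ℝ) 1) = Set.Ioo 0 1 := interior_Icc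
  have h01 : (0:ℝ) ∈ Set.Icc (0:ℝ) 1 := by constructor <;> norm_num
  have h11 : (1:ℝ) ∈ Set.Icc (0:ℝ) 1 := by constructor <;> norm_num
  have hu3cont : ContinuousOn u3 (Set.Icc 0 1) :=
    fun t ht => (hu4 t ht).continuousWithinAt
  have hu2cont : ContinuousOn u2 (Set.Icc 0 1) :=
    fun t ht => (hu3 t ht).continuousWithinAt
  -- u3 is monotone on [0,1]
  have hmono : MonotoneOn u3 (Set.Icc 0 1) := by
    apply monotoneOn_of_hasDerivWithinAt_nonneg (convex_Icc 0 1) hu3cont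
      (f' := u4)
    · intro x hx
      rw [hIcc] at hx ⊢
      exact ((hu4 x (Set.Ioo_subset_Icc_self hx)).mono
        (Set.Ioo_subset_Icc_self))
    · intro x hx
      rw [hIcc] at hx
      exact hpos x (Set.Ioo_subset_Icc_self hx)
  have hu3le : ∀ t ∈ Set.Icc (0:ℝ) 1, u3 t ≤ 0 := fun t ht => by
    have := hmono ht h11 ht.2
    linarith
  have hu3ge : ∀ t ∈ Set.Icc (0:ℝ) 1, u3 0 ≤ u3 t := fun t ht =>
    hmono h01 ht ht.1
  obtain ⟨M, hM⟩ : ∃ M : ℝ, M = -u3 0 := ⟨_, rfl⟩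
  have hMnn : 0 ≤ M := by
    have := hu3le 0 h01; rw [hM]; linarith
  -- FTC: u2 t = -∫ s in t..1, u3 s
  have hftc : ∀ t ∈ Set.Icc (0:ℝ) 1, (∫ s in t..1, u3 s) = u2 1 - u2 t := by
    intro t ht
    apply intervalIntegral.integral_eq_sub_of_hasDeriv_right_of_le ht.2
    · exact hu2cont.mono (Set.Icc_subset_Icc ht.1 le_rfl)
    · intro x hx
      have hx0 : (0:ℝ) < x := lt_of_le_of_lt ht.1 hx.1
      have hx' : x ∈ Set.Icc (0:ℝ) 1 := ⟨le_of_lt hx0, le_of_lt hx.2⟩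
      exact (((hu3 x hx').hasDerivAt (Icc_mem_nhds hx0 hx.2)).hasDerivWithinAt)
    · exact (hu3cont.mono (Set.Icc_subset_Icc ht.1 le_rfl)).intervalIntegrable_of_Icc ht.2
  -- pointwise bounds on u2
  have hu2nn : ∀ t ∈ Set.Icc (0:ℝ) 1, 0 ≤ u2 t := by
    intro t ht
    have h1 : (∫ s in t..1, u3 s) ≤ 0 := by
      have : (∫ s in t..1, u3 s) ≤ ∫ s in t..1, (0:ℝ) := by
        apply intervalIntegral.integral_mono_on ht.2
        · exact (hu3cont.mono (Set.Icc_subset_Icc ht.1 le_rfl)).intervalIntegrable_of_Icc ht.2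
        · exact intervalIntegrable_const
        · intro x hx
          exact hu3le x ⟨le_trans ht.1 hx.1, hx.2⟩
      simpa using this
    have := hftc t ht
    rw [hb2] at this
    linarith
  have hu2ub : ∀ t ∈ Set.Icc (0:ℝ) 1, u2 t ≤ M * (1 - t) := by
    intro t ht
    have h1 : (1 - t) * u3 0 ≤ ∫ s in t..1, u3 s := by
      have : (∫ s in t..1, (u3 0 : ℝ)) ≤ ∫ s in t..1, u3 s := by
        apply intervalIntegral.integral_mono_on ht.2
        · exact intervalIntegrable_const
        · exact (hu3cont.mono (Set.Icc_subset_Icc ht.1 le_rfl)).intervalIntegrable_of_Icc ht.2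
        · intro x hx
          exact hu3ge x ⟨le_trans ht.1 hx.1, hx.2⟩
      simpa [mul_comm] using this
    have := hftc t ht
    rw [hb2] at this
    rw [hM]
    nlinarith
  -- integral bound
  have hsq : (∫ t in (0:ℝ)..1, (u2 t) ^ 2) ≤ M ^ 2 / 3 := by
    have hle : (∫ t in (0:ℝ)..1, (u2 t) ^ 2) ≤ ∫ t in (0:ℝ)..1, (M * (1 - t)) ^ 2 := by
      apply intervalIntegral.integral_mono_on (by norm_num)
      · exact ((hu2cont.pow 2).intervalIntegrable_of_Icc (by norm_num))
      · exact Continuous.intervalIntegrable (by fun_prop) 0 1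
      · intro x hx
        exact pow_le_pow_left₀ (hu2nn x hx) (hu2ub x hx) 2
    have hval : (∫ t in (0:ℝ)..1, (M * (1 - t)) ^ 2) = M ^ 2 / 3 := by
      have key : ∀ t : ℝ, HasDerivAt (fun t : ℝ => M ^ 2 * (t - t ^ 2 + t ^ 3 / 3))
          ((M * (1 - t)) ^ 2) t := by
        intro t
        have h := (((hasDerivAt_id t).sub (hasDerivAt_pow 2 t)).add
          ((hasDerivAt_pow 3 t).div_const 3)).const_mul (M ^ 2)
        have e : (M * (1 - t)) ^ 2
            = M ^ 2 * ((1 - (2:ℕ) * t ^ (2 - 1)) + (3:ℕ) * t ^ (3 - 1) / 3) := by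
          push_cast; ring
        rw [e]
        exact h
      rw [intervalIntegral.integral_eq_sub_of_hasDerivAt (fun t _ => key t)
        (Continuous.intervalIntegrable (by fun_prop) 0 1)]
      norm_num
      ring
    linarith
  -- conclude
  have hs1 : Real.sqrt (∫ t in (0:ℝ)..1, (u2 t) ^ 2) ≤ Real.sqrt (M ^ 2 / 3) :=
    Real.sqrt_le_sqrt hsq
  have h3 : (0:ℝ) < Real.sqrt 3 := Real.sqrt_pos.mpr (by norm_num)
  have hs2 : Real.sqrt (M ^ 2 / 3) = M / Real.sqrt 3 := by
    have e : M ^ 2 / 3 = (M / Real.sqrt 3) ^ 2 := by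
      rw [div_pow, Real.sq_sqrt (by norm_num : (3:ℝ) ≥ 0)]
    rw [e, Real.sqrt_sq (by positivity)]
  have h2 : Real.sqrt 2 ≤ Real.sqrt 3 := Real.sqrt_le_sqrt (by norm_num)
  have hfin : Real.sqrt 2 * Real.sqrt (∫ t in (0:ℝ)..1, (u2 t) ^ 2) ≤ M := by
    calc Real.sqrt 2 * Real.sqrt (∫ t in (0:ℝ)..1, (u2 t) ^ 2)
        ≤ Real.sqrt 2 * (M / Real.sqrt 3) :=
          mul_le_mul_of_nonneg_left (hs1.trans_eq hs2) (Real.sqrt_nonneg 2)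
      _ ≤ M := by
          rw [mul_div_assoc', div_le_iff₀ h3]
          nlinarith [Real.sqrt_nonneg 2]
  rw [ge_iff_le, ← hM]
  exact hfin
end

section
/- If u ∈ C⁴[0,1] satisfies u(0)=u'(0)=u''(1)=u'''(1)=0 and u⁗ is nonnegative and nondecreasing on [0,1], then for all t ∈ [0,1], u(t) ≥ (√2/6)·(1-t)·t³ · (∫₀¹ (u''(s))² ds)^{1/2}. -/
open Set intervalIntegral Real

theorem stmt7 (u u1 u2 u3 u4 : ℝ → ℝ)
    (hu1 : ∀ t ∈ Set.Icc (0:ℝ) 1, HasDerivWithinAt u (u1 t) (Set.Icc 0 1) t)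
    (hu2 : ∀ t ∈ Set.Icc (0:ℝ) 1, HasDerivWithinAt u1 (u2 t) (Set.Icc 0 1) t)
    (hu3 : ∀ t ∈ Set.Icc (0:ℝ) 1, HasDerivWithinAt u2 (u3 t) (Set.Icc 0 1) t)
    (hu4 : ∀ t ∈ Set.Icc (0:ℝ) 1, HasDerivWithinAt u3 (u4 t) (Set.Icc 0 1) t)
    (hc4 : ContinuousOn u4 (Set.Icc 0 1))
    (hb0 : u 0 = 0) (hb1 : u1 0 = 0) (hb2 : u2 1 = 0) (hb3 : u3 1 = 0)
    (hpos : ∀ t ∈ Set.Icc (0:ℝ) 1, 0 ≤ u4 t)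
    (hmono : MonotoneOn u4 (Set.Icc 0 1)) :
    ∀ t ∈ Set.Icc (0:ℝ) 1,
      u t ≥ Real.sqrt 2 * (1 - t) * t ^ 3 / 6 *
        Real.sqrt (∫ s in (0:ℝ)..1, (u2 s) ^ 2) := by
  have hCvx : Convex ℝ (Icc (0:ℝ) 1) := convex_Icc 0 1
  have hc3 : ContinuousOn u3 (Icc (0:ℝ) 1) := fun t ht => (hu4 t ht).continuousWithinAt
  have hc2 : ContinuousOn u2 (Icc (0:ℝ) 1) := fun t ht => (hu3 t ht).continuousWithinAt
  have hc1 : ContinuousOn u1 (Icc (0:ℝ) 1) := fun t ht => (hu2 t ht).continuousWithinAt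
  have hd3 : ∀ x ∈ Ioo (0:ℝ) 1, HasDerivAt u3 (u4 x) x := fun x hx =>
    (hu4 x (Ioo_subset_Icc_self hx)).hasDerivAt (Icc_mem_nhds hx.1 hx.2)
  have hd2 : ∀ x ∈ Ioo (0:ℝ) 1, HasDerivAt u2 (u3 x) x := fun x hx =>
    (hu3 x (Ioo_subset_Icc_self hx)).hasDerivAt (Icc_mem_nhds hx.1 hx.2)
  have hd1 : ∀ x ∈ Ioo (0:ℝ) 1, HasDerivAt u1 (u2 x) x := fun x hx =>
    (hu2 x (Ioo_subset_Icc_self hx)).hasDerivAt (Icc_mem_nhds hx.1 hx.2)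
  have hdiff3 : DifferentiableOn ℝ u3 (interior (Icc (0:ℝ) 1)) := by
    rw [interior_Icc]
    exact fun x hx => ((hd3 x hx).differentiableAt).differentiableWithinAt
  -- u3 is nondecreasing
  have hmono3 : MonotoneOn u3 (Icc (0:ℝ) 1) := by
    apply monotoneOn_of_deriv_nonneg hCvx hc3 hdiff3
    intro x hx
    rw [interior_Icc] at hx
    rw [(hd3 x hx).deriv]
    exact hpos x (Ioo_subset_Icc_self hx)
  -- u3 is convex
  have hconv3 : ConvexOn ℝ (Icc (0:ℝ) 1) u3 := by
    apply MonotoneOn.convexOn_of_deriv hCvx hc3 hdiff3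
    intro a ha b hb hab
    rw [interior_Icc] at ha hb
    rw [(hd3 a ha).deriv, (hd3 b hb).deriv]
    exact hmono (Ioo_subset_Icc_self ha) (Ioo_subset_Icc_self hb) hab
  set K : ℝ := -u3 0 with hKdef
  have h01 : (0:ℝ) ∈ Icc (0:ℝ) 1 := left_mem_Icc.2 zero_le_one
  have h11 : (1:ℝ) ∈ Icc (0:ℝ) 1 := right_mem_Icc.2 zero_le_one
  have hK0 : 0 ≤ K := by
    have := hmono3 h01 h11 zero_le_one
    rw [hb3] at this
    simp [hKdef]
    linarith
  -- lower bound on u3 : u3 s ≥ -K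
  have hl3 : ∀ s ∈ Icc (0:ℝ) 1, -K ≤ u3 s := by
    intro s hs
    have := hmono3 h01 hs hs.1
    simp [hKdef]
    linarith
  -- chord bound : u3 s ≤ -(K*(1-s))
  have hu3chord : ∀ s ∈ Icc (0:ℝ) 1, u3 s ≤ -(K * (1 - s)) := by
    intro s hs
    have h := hconv3.2 h01 h11 (show (0:ℝ) ≤ 1 - s by linarith [hs.2]) hs.1
      (show (1 - s) + s = 1 by ring)
    simp [smul_eq_mul, hb3] at h
    simp only [hKdef]
    nlinarith [h]
  -- FTC for u2
  have hftc2 : ∀ t ∈ Icc (0:ℝ) 1, u2 t = -∫ s in t..1, u3 s := by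
    intro t ht
    have key : ∫ s in t..1, u3 s = u2 1 - u2 t := by
      apply intervalIntegral.integral_eq_sub_of_hasDeriv_right_of_le ht.2
        (hc2.mono (Icc_subset_Icc ht.1 le_rfl))
      · intro x hx
        exact (hd2 x ⟨lt_of_le_of_lt ht.1 hx.1, hx.2⟩).hasDerivWithinAt
      · apply ContinuousOn.intervalIntegrable
        rw [uIcc_of_le ht.2]
        exact hc3.mono (Icc_subset_Icc ht.1 le_rfl)
    rw [key, hb2]; ring
  -- integrability helpers
  have hi3 : ∀ t ∈ Icc (0:ℝ) 1, IntervalIntegrable u3 MeasureTheory.volume t 1 := by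
    intro t ht
    apply ContinuousOn.intervalIntegrable
    rw [uIcc_of_le ht.2]
    exact hc3.mono (Icc_subset_Icc ht.1 le_rfl)
  -- upper bound on u2
  have hub2 : ∀ t ∈ Icc (0:ℝ) 1, u2 t ≤ K * (1 - t) := by
    intro t ht
    rw [hftc2 t ht]
    have hm : ∫ s in t..1, (-K) ≤ ∫ s in t..1, u3 s := by
      apply intervalIntegral.integral_mono_on ht.2 intervalIntegrable_const (hi3 t ht)
      intro s hs
      exact hl3 s ⟨le_trans ht.1 hs.1, hs.2⟩
    rw [intervalIntegral.integral_const] at hm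
    simp [smul_eq_mul] at hm
    nlinarith
  -- lower bound on u2
  have hlb2 : ∀ t ∈ Icc (0:ℝ) 1, K * (1 - t) ^ 2 / 2 ≤ u2 t := by
    intro t ht
    rw [hftc2 t ht]
    have hm : ∫ s in t..1, u3 s ≤ ∫ s in t..1, -(K * (1 - s)) := by
      apply intervalIntegral.integral_mono_on ht.2 (hi3 t ht)
      · apply ContinuousOn.intervalIntegrable
        apply Continuous.continuousOn
        fun_prop
      · intro s hs
        exact hu3chord s ⟨le_trans ht.1 hs.1, hs.2⟩
    have hval : ∫ s in t..1, -(K * (1 - s)) = -(K * (1 - t) ^ 2 / 2) := by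
      rw [intervalIntegral.integral_neg, intervalIntegral.integral_const_mul]
      have : ∫ s in t..1, (1 - s) = ∫ x in (1-(1:ℝ))..(1-t), x :=
        intervalIntegral.integral_comp_sub_left (fun x => x) 1
      rw [this, integral_id]
      ring
    rw [hval] at hm
    linarith
  have hu2nn : ∀ t ∈ Icc (0:ℝ) 1, 0 ≤ u2 t := by
    intro t ht
    have := hlb2 t ht
    nlinarith [ht.1, ht.2]
  -- bound on the energy integral
  have hEbound : (∫ s in (0:ℝ)..1, (u2 s) ^ 2) ≤ K ^ 2 / 3 := by
    have hm : ∫ s in (0:ℝ)..1, (u2 s) ^ 2 ≤ ∫ s in (0:ℝ)..1, (K * (1 - s)) ^ 2 := by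
      apply intervalIntegral.integral_mono_on zero_le_one
      · apply ContinuousOn.intervalIntegrable
        rw [uIcc_of_le zero_le_one]
        exact hc2.pow 2
      · apply ContinuousOn.intervalIntegrable
        apply Continuous.continuousOn
        fun_prop
      · intro s hs
        have h1 := hu2nn s hs
        have h2 := hub2 s hs
        nlinarith
    have hval : ∫ s in (0:ℝ)..1, (K * (1 - s)) ^ 2 = K ^ 2 / 3 := by
      have hrw : ∀ s : ℝ, (K * (1 - s)) ^ 2 = K ^ 2 * (1 - s) ^ 2 := fun s => by ring
      simp_rw [hrw]
      rw [intervalIntegral.integral_const_mul]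
      have : ∫ s in (0:ℝ)..1, (1 - s) ^ 2 = ∫ x in (1-(1:ℝ))..(1-(0:ℝ)), x ^ 2 :=
        intervalIntegral.integral_comp_sub_left (fun x => x ^ 2) 1
      rw [this, integral_pow]
      ring_nf
    rw [hval] at hm
    exact hm
  -- FTC for u1 and u
  have hftc1 : ∀ t ∈ Icc (0:ℝ) 1, u1 t = ∫ s in (0:ℝ)..t, u2 s := by
    intro t ht
    have key : ∫ s in (0:ℝ)..t, u2 s = u1 t - u1 0 := by
      apply intervalIntegral.integral_eq_sub_of_hasDeriv_right_of_le ht.1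
        (hc1.mono (Icc_subset_Icc le_rfl ht.2))
      · intro x hx
        exact (hd1 x ⟨hx.1, lt_of_lt_of_le hx.2 ht.2⟩).hasDerivWithinAt
      · apply ContinuousOn.intervalIntegrable
        rw [uIcc_of_le ht.1]
        exact hc2.mono (Icc_subset_Icc le_rfl ht.2)
    rw [key, hb1]; ring
  have hftc0 : ∀ t ∈ Icc (0:ℝ) 1, u t = ∫ s in (0:ℝ)..t, u1 s := by
    intro t ht
    have key : ∫ s in (0:ℝ)..t, u1 s = u t - u 0 := by
      apply intervalIntegral.integral_eq_sub_of_hasDeriv_right_of_le ht.1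
        ((show ContinuousOn u (Icc (0:ℝ) 1) from fun s hs => (hu1 s hs).continuousWithinAt).mono
          (Icc_subset_Icc le_rfl ht.2))
      · intro x hx
        exact ((hu1 x (Ioo_subset_Icc_self ⟨hx.1, lt_of_lt_of_le hx.2 ht.2⟩)).hasDerivAt
          (Icc_mem_nhds hx.1 (lt_of_lt_of_le hx.2 ht.2))).hasDerivWithinAt
      · apply ContinuousOn.intervalIntegrable
        rw [uIcc_of_le ht.1]
        exact hc1.mono (Icc_subset_Icc le_rfl ht.2)
    rw [key, hb0]; ring
  -- lower bound on u1
  have hlb1 : ∀ t ∈ Icc (0:ℝ) 1, K * (1 - (1 - t) ^ 3) / 6 ≤ u1 t := by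
    intro t ht
    rw [hftc1 t ht]
    have hm : ∫ s in (0:ℝ)..t, K * (1 - s) ^ 2 / 2 ≤ ∫ s in (0:ℝ)..t, u2 s := by
      apply intervalIntegral.integral_mono_on ht.1
      · apply ContinuousOn.intervalIntegrable
        apply Continuous.continuousOn
        fun_prop
      · apply ContinuousOn.intervalIntegrable
        rw [uIcc_of_le ht.1]
        exact hc2.mono (Icc_subset_Icc le_rfl ht.2)
      · intro s hs
        exact hlb2 s ⟨hs.1, le_trans hs.2 ht.2⟩
    have hval : ∫ s in (0:ℝ)..t, K * (1 - s) ^ 2 / 2 = K * (1 - (1 - t) ^ 3) / 6 := by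
      have hrw : ∀ s : ℝ, K * (1 - s) ^ 2 / 2 = (K / 2) * (1 - s) ^ 2 := fun s => by ring
      simp_rw [hrw]
      rw [intervalIntegral.integral_const_mul]
      have : ∫ s in (0:ℝ)..t, (1 - s) ^ 2 = ∫ x in (1-t)..(1-(0:ℝ)), x ^ 2 :=
        intervalIntegral.integral_comp_sub_left (fun x => x ^ 2) 1
      rw [this, integral_pow]
      ring
    rw [hval] at hm
    exact hm
  intro t ht
  -- lower bound on u
  have hlbu : K * (4 * t - 1 + (1 - t) ^ 4) / 24 ≤ u t := by
    rw [hftc0 t ht]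
    have hm : ∫ s in (0:ℝ)..t, K * (1 - (1 - s) ^ 3) / 6 ≤ ∫ s in (0:ℝ)..t, u1 s := by
      apply intervalIntegral.integral_mono_on ht.1
      · apply ContinuousOn.intervalIntegrable
        apply Continuous.continuousOn
        fun_prop
      · apply ContinuousOn.intervalIntegrable
        rw [uIcc_of_le ht.1]
        exact hc1.mono (Icc_subset_Icc le_rfl ht.2)
      · intro s hs
        exact hlb1 s ⟨hs.1, le_trans hs.2 ht.2⟩
    have hval : ∫ s in (0:ℝ)..t, K * (1 - (1 - s) ^ 3) / 6
        = K * (4 * t - 1 + (1 - t) ^ 4) / 24 := by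
      have hrw : ∀ s : ℝ, K * (1 - (1 - s) ^ 3) / 6 = K / 6 - (K / 6) * (1 - s) ^ 3 :=
        fun s => by ring
      simp_rw [hrw]
      rw [intervalIntegral.integral_sub intervalIntegrable_const
        (by apply ContinuousOn.intervalIntegrable; apply Continuous.continuousOn; fun_prop)]
      rw [intervalIntegral.integral_const_mul, intervalIntegral.integral_const]
      have : ∫ s in (0:ℝ)..t, (1 - s) ^ 3 = ∫ x in (1-t)..(1-(0:ℝ)), x ^ 3 :=
        intervalIntegral.integral_comp_sub_left (fun x => x ^ 3) 1
      rw [this, integral_pow]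
      simp [smul_eq_mul]
      ring
    rw [hval] at hm
    exact hm
  -- the sqrt estimate
  have hInn : 0 ≤ ∫ s in (0:ℝ)..1, (u2 s) ^ 2 := by
    apply intervalIntegral.integral_nonneg zero_le_one
    intro s hs
    positivity
  have hs2 : Real.sqrt 2 * Real.sqrt (∫ s in (0:ℝ)..1, (u2 s) ^ 2) ≤ K := by
    rw [← Real.sqrt_mul (by norm_num : (0:ℝ) ≤ 2)]
    have h1 : 2 * ∫ s in (0:ℝ)..1, (u2 s) ^ 2 ≤ K ^ 2 := by nlinarith
    calc Real.sqrt (2 * ∫ s in (0:ℝ)..1, (u2 s) ^ 2) ≤ Real.sqrt (K ^ 2) :=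
          Real.sqrt_le_sqrt h1
      _ = K := by rw [Real.sqrt_sq hK0]
  -- finish
  have hcoef : 0 ≤ (1 - t) * t ^ 3 / 6 := by
    have h1 : (0:ℝ) ≤ 1 - t := by linarith [ht.2]
    have h2 : (0:ℝ) ≤ t ^ 3 := pow_nonneg ht.1 3
    have := mul_nonneg h1 h2
    linarith
  have heq : Real.sqrt 2 * (1 - t) * t ^ 3 / 6 * Real.sqrt (∫ s in (0:ℝ)..1, (u2 s) ^ 2)
      = (1 - t) * t ^ 3 / 6 * (Real.sqrt 2 * Real.sqrt (∫ s in (0:ℝ)..1, (u2 s) ^ 2)) := by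
    ring
  rw [ge_iff_le, heq]
  calc (1 - t) * t ^ 3 / 6 * (Real.sqrt 2 * Real.sqrt (∫ s in (0:ℝ)..1, (u2 s) ^ 2))
      ≤ (1 - t) * t ^ 3 / 6 * K := mul_le_mul_of_nonneg_left hs2 hcoef
    _ ≤ K * (4 * t - 1 + (1 - t) ^ 4) / 24 := by
        nlinarith [ht.1, ht.2, hK0, mul_nonneg (mul_nonneg hK0 (sq_nonneg t)) (sq_nonneg (t - 4/5))]
    _ ≤ u t := hlbu
end

section
/- Let f : ℝ → ℝ be defined by f(u) = 0 for u ≤ 0, f(u) = 4600·u for 0 ≤ u ≤ 0.03, and f(u) = 138 for u ≥ 0.03. Then with M₀(t) = √2(1-t)t³/6 and M₁(t) = (2/3)t^{3/2}, R₀ = 1 and R₁ = 37: (a) ∫₀¹ M₀(t)·f(M₀(t)·R₀) dt ≥ R₀ and (b) ∫₀¹ M₁(t)·f(M₁(t)·R₁) dt ≤ R₁. -/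
open Set intervalIntegral Real

noncomputable def fex (u : ℝ) : ℝ :=
  if u ≤ 0 then 0 else if u ≤ 3 / 100 then 4600 * u else 138

noncomputable def M₀ (t : ℝ) : ℝ := Real.sqrt 2 * (1 - t) * t ^ 3 / 6

noncomputable def M₁ (t : ℝ) : ℝ := 2 / 3 * t ^ ((3:ℝ) / 2)

lemma fex_eq_min (u : ℝ) : fex u = min (max 0 (4600 * u)) 138 := by
  unfold fex
  rcases le_or_gt u 0 with h | h
  · rw [if_pos h, max_eq_left (by nlinarith), min_eq_left (by norm_num)]
  · rw [if_neg (not_le.2 h), max_eq_right (by nlinarith)]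
    rcases le_or_gt u (3/100) with h2 | h2
    · rw [if_pos h2, min_eq_left (by nlinarith)]
    · rw [if_neg (not_le.2 h2), min_eq_right (by nlinarith)]

lemma fex_continuous : Continuous fex := by
  have : fex = fun u => min (max 0 (4600 * u)) 138 := funext fex_eq_min
  rw [this]
  fun_prop

lemma fex_le (u : ℝ) : fex u ≤ 138 := by rw [fex_eq_min]; exact min_le_right _ _

lemma sqrt2_lt : Real.sqrt 2 < 3/2 := by
  nlinarith [Real.sq_sqrt (by norm_num : (2:ℝ) ≥ 0), Real.sqrt_nonneg 2]

lemma M₀_nonneg {t : ℝ} (h0 : 0 ≤ t) (h1 : t ≤ 1) : 0 ≤ M₀ t := by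
  unfold M₀
  have h := mul_nonneg (mul_nonneg (Real.sqrt_nonneg 2) (by linarith : (0:ℝ) ≤ 1 - t))
    (pow_nonneg h0 3)
  linarith

lemma M₀_le {t : ℝ} (h0 : 0 ≤ t) (h1 : t ≤ 1) : M₀ t ≤ 3/100 := by
  unfold M₀
  have hs := Real.sqrt_nonneg 2
  have hlt := sqrt2_lt
  have hb : (1 - t) * t ^ 3 ≤ 27/256 := by nlinarith [sq_nonneg (t - 3/4), sq_nonneg t]
  have hb0 : 0 ≤ (1 - t) * t ^ 3 :=
    mul_nonneg (by linarith) (pow_nonneg h0 3)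
  nlinarith

theorem stmt18 :
    (∫ t in (0:ℝ)..1, M₀ t * fex (M₀ t * 1)) ≥ 1 ∧
      (∫ t in (0:ℝ)..1, M₁ t * fex (M₁ t * 37)) ≤ 37 := by
  constructor
  · -- part (a)
    have hcong : ∀ t ∈ Set.uIcc (0:ℝ) 1,
        M₀ t * fex (M₀ t * 1) = (2300/9) * (t^6 - 2*t^7 + t^8) := by
      intro t ht
      rw [Set.uIcc_of_le (by norm_num : (0:ℝ) ≤ 1)] at ht
      obtain ⟨h0, h1⟩ := ht
      have hn := M₀_nonneg h0 h1
      have hl := M₀_le h0 h1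
      rw [mul_one]
      have hval : fex (M₀ t) = 4600 * M₀ t := by
        unfold fex
        rcases le_or_gt (M₀ t) 0 with h | h
        · rw [if_pos h]; have : M₀ t = 0 := le_antisymm h hn; rw [this]; ring
        · rw [if_neg (not_le.2 h), if_pos hl]
      rw [hval]
      unfold M₀
      have h2 : Real.sqrt 2 * Real.sqrt 2 = 2 := Real.mul_self_sqrt (by norm_num)
      linear_combination (4600/36 * ((1-t)*t^3)^2) * h2
    rw [intervalIntegral.integral_congr hcong]
    have h6 : IntervalIntegrable (fun t : ℝ => t^6) MeasureTheory.volume 0 1 :=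
      (continuous_pow 6).intervalIntegrable 0 1
    have h7 : IntervalIntegrable (fun t : ℝ => 2*t^7) MeasureTheory.volume 0 1 :=
      ((continuous_pow 7).intervalIntegrable 0 1).const_mul 2
    have h8 : IntervalIntegrable (fun t : ℝ => t^8) MeasureTheory.volume 0 1 :=
      (continuous_pow 8).intervalIntegrable 0 1
    rw [intervalIntegral.integral_const_mul]
    rw [show (fun t : ℝ => t^6 - 2*t^7 + t^8) = (fun t : ℝ => (t^6 - 2*t^7) + t^8) from rfl]
    rw [intervalIntegral.integral_add (h6.sub h7) h8,
        intervalIntegral.integral_sub h6 h7,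
        intervalIntegral.integral_const_mul]
    simp [integral_pow]
    norm_num
  · -- part (b)
    have hM₁cont : Continuous M₁ := by
      unfold M₁
      apply Continuous.mul continuous_const
      rw [continuous_iff_continuousAt]
      intro x
      exact Real.continuousAt_rpow_const x _ (Or.inr (by norm_num))
    have hInt1 : IntervalIntegrable (fun t => M₁ t * fex (M₁ t * 37))
        MeasureTheory.volume 0 1 :=
      (hM₁cont.mul (fex_continuous.comp (hM₁cont.mul continuous_const))).intervalIntegrable 0 1
    have hInt2 : IntervalIntegrable (fun t => 138 * M₁ t) MeasureTheory.volume 0 1 :=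
      (continuous_const.mul hM₁cont).intervalIntegrable 0 1
    have hmono : (∫ t in (0:ℝ)..1, M₁ t * fex (M₁ t * 37)) ≤
        ∫ t in (0:ℝ)..1, 138 * M₁ t := by
      apply intervalIntegral.integral_mono_on (by norm_num) hInt1 hInt2
      intro t ht
      have h0 : 0 ≤ t := ht.1
      have hn : 0 ≤ M₁ t := by
        unfold M₁
        positivity
      calc M₁ t * fex (M₁ t * 37) ≤ M₁ t * 138 := by
            exact mul_le_mul_of_nonneg_left (fex_le _) hn
        _ = 138 * M₁ t := by ring
    refine hmono.trans ?_
    have : (∫ t in (0:ℝ)..1, 138 * M₁ t) = 92 * ∫ t in (0:ℝ)..1, t ^ ((3:ℝ)/2) := by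
      unfold M₁
      rw [intervalIntegral.integral_const_mul]
      rw [show (∫ t in (0:ℝ)..1, 2/3 * t ^ ((3:ℝ)/2)) = 2/3 * ∫ t in (0:ℝ)..1, t ^ ((3:ℝ)/2)
        from intervalIntegral.integral_const_mul _ _]
      ring
    rw [this]
    rw [integral_rpow (Or.inl (by norm_num))]
    rw [Real.one_rpow, Real.zero_rpow (by norm_num)]
    norm_num
end
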